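/- arXiv:2201.05688 — 2 statements merged into one kernel-verified Lean document; each statement's English description precedes it below -/
import Mathlib

section
/- Let (Re, S, V) be a vector S-metric space over an Archimedean vector lattice V, and let ⟨h_n⟩ be a sequence in Re such that S(h_n, h_n, h_{n+1}) ≤ α · S(h_{n-1}, h_{n-1}, h_n) for all n ≥ 1, where α ∈ [0, 1). Then ⟨h_n⟩ is a V-Cauchy sequence, i.e., there exists a sequence ⟨μ_n⟩ in V with μ_n ↓ 0 and S(h_n, h_n, h_{n+q}) ≤ μ_n for all n and q. -/
/-- A sequence `μ` in `V` decreases to zero: it is antitone with infimum 0. -/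
def DownToZero {V : Type*} [Lattice V] [AddCommGroup V] (μ : ℕ → V) : Prop :=
  Antitone μ ∧ IsGLB (Set.range μ) 0

/-- `V` is Archimedean: `inf {(1/m) v} = 0` for every `v ≥ 0`. -/
def VArchimedean (V : Type*) [Lattice V] [AddCommGroup V] [Module ℝ V] : Prop :=
  ∀ v : V, 0 ≤ v → IsGLB (Set.range fun m : ℕ => ((m : ℝ) + 1)⁻¹ • v) 0

/-!
Iterating the contraction gives `S(hₖ, hₖ, hₖ₊₁) ≤ αᵏ d` with `d = S(h₀, h₀, h₁)`. The rectangle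
inequality through `hₙ₊₁`, together with the symmetry `S(a, a, b) = S(b, b, a)`, gives
`S(hₙ, hₙ, hₙ₊q) ≤ 2 S(hₙ, hₙ, hₙ₊₁) + S(hₙ₊₁, hₙ₊₁, hₙ₊q)`, hence
`S(hₙ, hₙ, hₙ₊q) ≤ 2 ∑_{n ≤ k < n+q} αᵏ d ≤ (2αⁿ / (1 - α)) d`. The real coefficients decrease
to `0`, and the Archimedean property says exactly that their multiples of `d` then decrease to `0`
in `V`.
-/

open Finset Filter Topology

theorem le_pow_smul_of_le_smul {V : Type*} [AddCommMonoid V] [PartialOrder V] [Module ℝ V]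
    [PosSMulMono ℝ V] {d : ℕ → V} {α : ℝ} (hα : 0 ≤ α) (hd : ∀ n, d (n + 1) ≤ α • d n) :
    ∀ n, d n ≤ α ^ n • d 0
  | 0 => by rw [pow_zero, one_smul]
  | n + 1 => calc
      d (n + 1) ≤ α • d n := hd n
      _ ≤ α • α ^ n • d 0 := smul_le_smul_of_nonneg_left (le_pow_smul_of_le_smul hα hd n) hα
      _ = α ^ (n + 1) • d 0 := by rw [smul_smul, pow_succ']

section SMetric

variable {X V : Type*} [AddCommGroup V] [PartialOrder V] {S : X → X → X → V}
  (hself : ∀ a, S a a a = 0) (hrect : ∀ a b c d, S a b c ≤ S a a d + S b b d + S c c d)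
include hself hrect

theorem S_self_self_comm (a b : X) : S a a b = S b b a := by
  have key : ∀ a b, S a a b ≤ S b b a := fun a b => by simpa [hself] using hrect a a b a
  exact le_antisymm (key a b) (key b a)

theorem S_le_two_nsmul_sum_Ico [IsOrderedAddMonoid V] (h : ℕ → X) (n q : ℕ) :
    S (h n) (h n) (h (n + q)) ≤ 2 • ∑ k ∈ Ico n (n + q), S (h k) (h k) (h (k + 1)) := by
  induction q generalizing n with
  | zero => simp [hself]
  | succ q ih =>
    rw [sum_eq_sum_Ico_succ_bot (by omega), smul_add, show n + (q + 1) = n + 1 + q by omega]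
    calc S (h n) (h n) (h (n + 1 + q))
        ≤ S (h n) (h n) (h (n + 1)) + S (h n) (h n) (h (n + 1))
          + S (h (n + 1 + q)) (h (n + 1 + q)) (h (n + 1)) := hrect ..
      _ = 2 • S (h n) (h n) (h (n + 1)) + S (h (n + 1)) (h (n + 1)) (h (n + 1 + q)) := by
        rw [two_nsmul, S_self_self_comm hself hrect (h (n + 1 + q))]
      _ ≤ _ := add_le_add_right (ih (n + 1)) _

end SMetric

theorem VArchimedean.downToZero_smul {V : Type*} [Lattice V] [AddCommGroup V]
    [IsOrderedAddMonoid V] [Module ℝ V] [PosSMulMono ℝ V] (hV : VArchimedean V) {v : V}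
    (hv : 0 ≤ v) {r : ℕ → ℝ} (hr : Antitone r) (hr0 : Tendsto r atTop (𝓝 0)) :
    DownToZero fun n => r n • v := by
  refine ⟨fun m n hmn => smul_le_smul_of_nonneg_right (hr hmn) hv,
    ⟨?_, fun b hb => (hV v hv).2 ?_⟩⟩
  · rintro _ ⟨n, rfl⟩
    exact smul_nonneg (hr.le_of_tendsto hr0 n) hv
  · rintro _ ⟨m, rfl⟩
    have hm : (0 : ℝ) < ((m : ℝ) + 1)⁻¹ := by positivity
    obtain ⟨n, hn⟩ := (hr0.eventually (ge_mem_nhds hm)).exists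
    exact (hb ⟨n, rfl⟩).trans (smul_le_smul_of_nonneg_right hn hv)

/-- Lemma 2.1: a sequence satisfying the contraction condition is V-Cauchy. -/
theorem contractive_seq_is_V_Cauchy {Re V : Type*}
    [Lattice V] [AddCommGroup V] [CovariantClass V V (· + ·) (· ≤ ·)]
    [Module ℝ V] [PosSMulMono ℝ V]
    (S : Re → Re → Re → V)
    (hnonneg : ∀ a b c, 0 ≤ S a b c)
    (hzero : ∀ a b c, S a b c = 0 ↔ a = b ∧ b = c)
    (hrect : ∀ a b c d, S a b c ≤ S a a d + S b b d + S c c d)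
    (hArch : VArchimedean V)
    (h : ℕ → Re) (α : ℝ) (hα0 : 0 ≤ α) (hα1 : α < 1)
    (hcontr : ∀ n : ℕ,
      S (h (n + 1)) (h (n + 1)) (h (n + 2)) ≤ α • S (h n) (h n) (h (n + 1))) :
    ∃ μ : ℕ → V, DownToZero μ ∧ ∀ n q : ℕ, S (h n) (h n) (h (n + q)) ≤ μ n := by
  have : IsOrderedAddMonoid V := { add_le_add_left := fun _ _ hab c => by gcongr }
  have hself : ∀ a, S a a a = 0 := fun a => (hzero a a a).2 ⟨rfl, rfl⟩
  set d := S (h 0) (h 0) (h 1)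
  have hgeom : ∀ n, S (h n) (h n) (h (n + 1)) ≤ α ^ n • d :=
    le_pow_smul_of_le_smul (d := fun n => S (h n) (h n) (h (n + 1))) hα0 hcontr
  refine ⟨fun n => (2 * (α ^ n / (1 - α))) • d, hArch.downToZero_smul (hnonneg ..) ?_ ?_,
    fun n q => ?_⟩
  · have : 0 < 1 - α := by linarith
    exact fun m n hmn => by
      dsimp only; gcongr 2 * (?_ / _); exact pow_le_pow_of_le_one hα0 hα1.le hmn
  · simpa using ((tendsto_pow_atTop_nhds_zero_of_lt_one hα0 hα1).div_const (1 - α)).const_mul 2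
  calc S (h n) (h n) (h (n + q))
      ≤ 2 • ∑ k ∈ Ico n (n + q), S (h k) (h k) (h (k + 1)) :=
        S_le_two_nsmul_sum_Ico hself hrect h n q
    _ ≤ 2 • ∑ k ∈ Ico n (n + q), α ^ k • d := by gcongr with k; exact hgeom k
    _ = (2 * ∑ k ∈ Ico n (n + q), α ^ k) • d := by
        rw [← sum_smul, mul_smul, ofNat_smul_eq_nsmul (R := ℝ)]
    _ ≤ (2 * (α ^ n / (1 - α))) • d :=
        smul_le_smul_of_nonneg_right (by gcongr; exact geom_sum_Ico_le_of_lt_one hα0 hα1)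
          (hnonneg ..)
end

section
/- Let (Re, S, V) be a vector S-metric space and suppose f, K : Re → Re satisfy: for all x, y ∈ Re, S(fx, fx, fy) ≤ q·u for some u ∈ {S(Kx,Kx,Ky), S(Kx,Kx,fx), S(Ky,Ky,fy), S(Kx,Kx,fy), S(Ky,Ky,fx)}, with q ∈ [0,1). If p and p' are both common fixed points of f and K (i.e., fp = Kp = p and fp' = Kp' = p'), then p = p'. -/
/-! At two common fixed points `p`, `p'` every candidate `u` in the contractive condition is
either `S p p p'` (after the symmetry `S x x y = S y y x`) or a diagonal value `S x x x = 0`, so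
`S p p p' ≤ q • S p p p'` or `S p p p' ≤ 0`; as `q < 1`, both force `S p p p' = 0`. -/

theorem sMetric_self_self_comm {α V : Type*} [AddCommMonoid V] [PartialOrder V]
    {S : α → α → α → V} (hdiag : ∀ x, S x x x = 0)
    (hrect : ∀ a b c d, S a b c ≤ S a a d + S b b d + S c c d) (x y : α) :
    S x x y = S y y x := by
  have key : ∀ x y, S x x y ≤ S y y x := fun x y => by
    simpa only [hdiag, zero_add] using hrect x x y x
  exact (key x y).antisymm (key y x)

theorem eq_zero_of_le_smul_self {V : Type*} [AddCommGroup V] [PartialOrder V] [AddLeftMono V]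
    [Module ℝ V] [PosSMulMono ℝ V] {v : V} {q : ℝ} (hq : q < 1) (hv : 0 ≤ v) (h : v ≤ q • v) :
    v = 0 := by
  have hpos : 0 < 1 - q := sub_pos.2 hq
  have : (1 - q) • v ≤ (1 - q) • 0 := by
    rw [smul_zero, sub_smul, one_smul]
    exact sub_nonpos.2 h
  exact ((smul_le_smul_iff_of_pos_left hpos).1 this).antisymm hv

theorem common_fixed_point_unique_general {Re V : Type*}
    [Lattice V] [AddCommGroup V] [CovariantClass V V (· + ·) (· ≤ ·)]
    [Module ℝ V] [PosSMulMono ℝ V]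
    (S : Re → Re → Re → V)
    (hnonneg : ∀ a b c, 0 ≤ S a b c)
    (hzero : ∀ a b c, S a b c = 0 ↔ a = b ∧ b = c)
    (hrect : ∀ a b c d, S a b c ≤ S a a d + S b b d + S c c d)
    (f K : Re → Re)
    (q : ℝ) (hq1 : q < 1)
    (hcontr : ∀ x y : Re, ∃ u ∈ ({S (K x) (K x) (K y), S (K x) (K x) (f x),
        S (K y) (K y) (f y), S (K x) (K x) (f y), S (K y) (K y) (f x)} : Set V),
      S (f x) (f x) (f y) ≤ q • u)
    (p p' : Re)
    (hp : f p = p ∧ K p = p) (hp' : f p' = p' ∧ K p' = p') :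
    p = p' := by
  obtain ⟨hfp, hKp⟩ := hp
  obtain ⟨hfp', hKp'⟩ := hp'
  have hdiag : ∀ x, S x x x = 0 := fun x => (hzero x x x).2 ⟨rfl, rfl⟩
  obtain ⟨u, hu, hle⟩ := hcontr p p'
  rw [hfp, hfp', hKp, hKp', hdiag, hdiag, sMetric_self_self_comm hdiag hrect p' p] at hu
  rw [hfp, hfp'] at hle
  have hS : S p p p' = 0 := by
    replace hu : u = 0 ∨ u = S p p p' := by
      simp only [Set.mem_insert_iff, Set.mem_singleton_iff] at hu
      tauto
    rcases hu with rfl | rfl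
    · exact (hle.trans_eq (smul_zero q)).antisymm (hnonneg p p p')
    · exact eq_zero_of_le_smul_self hq1 (hnonneg p p p') hle
  exact ((hzero p p p').1 hS).2

/-- Uniqueness of common fixed points under the five-term contractive condition. -/
theorem common_fixed_point_unique {Re V : Type*}
    [Lattice V] [AddCommGroup V] [CovariantClass V V (· + ·) (· ≤ ·)]
    [Module ℝ V] [PosSMulMono ℝ V]
    (S : Re → Re → Re → V)
    (hnonneg : ∀ a b c, 0 ≤ S a b c)
    (hzero : ∀ a b c, S a b c = 0 ↔ a = b ∧ b = c)
    (hrect : ∀ a b c d, S a b c ≤ S a a d + S b b d + S c c d)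
    (f K : Re → Re)
    (q : ℝ) (hq0 : 0 ≤ q) (hq1 : q < 1)
    (hcontr : ∀ x y : Re, ∃ u ∈ ({S (K x) (K x) (K y), S (K x) (K x) (f x),
        S (K y) (K y) (f y), S (K x) (K x) (f y), S (K y) (K y) (f x)} : Set V),
      S (f x) (f x) (f y) ≤ q • u)
    (p p' : Re)
    (hp : f p = p ∧ K p = p) (hp' : f p' = p' ∧ K p' = p') :
    p = p' :=
  common_fixed_point_unique_general S hnonneg hzero hrect f K q hq1 hcontr p p' hp hp'
end
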